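/- Let D be an edge set with u,v connected in G−D, and let P = π_{G−D}(u,v). If x is a vertex on P such that π(x,v) contains no edge of D, then for every vertex w lying on the suffix of P from x to v, the path π(w,v) contains no edge of D. -/

import Mathlib

open SimpleGraph

variable {V : Type*}

/-- Total weight of a walk with respect to edge weights `w`. -/
def walkWeight (w : Sym2 V → ℝ) {G : SimpleGraph V} {a b : V} (p : G.Walk a b) : ℝ :=
  (p.edges.map w).sum

/-- `p` is the/a minimum-weight path from `a` to `b` in `G`. -/
def IsShortestPath (w : Sym2 V → ℝ) (G : SimpleGraph V) {a b : V} (p : G.Walk a b) : Prop :=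
  p.IsPath ∧ ∀ q : G.Walk a b, q.IsPath → walkWeight w p ≤ walkWeight w q

/-- `Decomposable w G k p` : `p` is the concatenation of at most `k+1` shortest paths
of `G` interleaved with at most `k` single edges. -/
inductive Decomposable (w : Sym2 V → ℝ) (G : SimpleGraph V) :
    ℕ → ∀ {a b : V}, G.Walk a b → Prop
  | single {a b : V} (k : ℕ) (p : G.Walk a b) (hp : IsShortestPath w G p) :
      Decomposable w G k p
  | cons {a b c d : V} (k : ℕ) (p : G.Walk a b) (h : G.Adj b c) (q : G.Walk c d)
      (hp : IsShortestPath w G p) (hq : Decomposable w G k q) :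
      Decomposable w G (k + 1) (p.append (Walk.cons h q))

/-- The rank of a walk `p` in `G`: the least `k` such that `p` is `k`-decomposable. -/
noncomputable def pathRank (w : Sym2 V → ℝ) (G : SimpleGraph V) {a b : V} (p : G.Walk a b) : ℕ :=
  sInf {k | Decomposable w G k p}

/-!
The suffix of `P` from `x` is the shortest `x`–`v` path of `G − D`. Since `π(x,v)` avoids `D`,
it is also a shortest path of `G − D`, so by uniqueness the suffix is `π(x,v)` itself. For `z`
on it, the suffix of `π(x,v)` from `z` is a shortest path of `G`, hence equals `π(z,v)`, and its
edges are among those of `π(x,v)`, none of which lies in `D`.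
-/

section ShortestPaths

variable {w : Sym2 V → ℝ} {G H : SimpleGraph V} {a b c : V}

lemma walkWeight_append (p : G.Walk a b) (q : G.Walk b c) :
    walkWeight w (p.append q) = walkWeight w p + walkWeight w q := by
  simp [walkWeight, Walk.edges_append]

lemma walkWeight_transfer (p : G.Walk a b) (hp : ∀ e ∈ p.edges, e ∈ H.edgeSet) :
    walkWeight w (p.transfer H hp) = walkWeight w p := by
  simp [walkWeight]

lemma walkWeight_bypass_le [DecidableEq V] (hw : ∀ e ∈ G.edgeSet, 0 ≤ w e) (p : G.Walk a b) :
    walkWeight w p.bypass ≤ walkWeight w p :=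
  (p.edges_bypass_sublist_edges.map w).sum_le_sum fun _ hmem => by
    obtain ⟨e, he, rfl⟩ := List.mem_map.mp hmem
    exact hw e (p.edges_subset_edgeSet he)

lemma IsShortestPath.walkWeight_le [DecidableEq V] (hw : ∀ e ∈ G.edgeSet, 0 ≤ w e)
    {p : G.Walk a b} (hp : IsShortestPath w G p) (q : G.Walk a b) :
    walkWeight w p ≤ walkWeight w q :=
  (hp.2 q.bypass q.bypass_isPath).trans (walkWeight_bypass_le hw q)

lemma IsShortestPath.dropUntil [DecidableEq V] (hw : ∀ e ∈ G.edgeSet, 0 ≤ w e)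
    {p : G.Walk a b} (hp : IsShortestPath w G p) (hc : c ∈ p.support) :
    IsShortestPath w G (p.dropUntil c hc) := by
  refine ⟨hp.1.dropUntil hc, fun q _ => ?_⟩
  have hsplit := walkWeight_append (w := w) (p.takeUntil c hc) (p.dropUntil c hc)
  rw [p.take_spec hc] at hsplit
  have hle := hp.walkWeight_le hw ((p.takeUntil c hc).append q)
  rw [walkWeight_append] at hle
  linarith

lemma IsShortestPath.transfer {p : G.Walk a b} (hp : IsShortestPath w G p) (hHG : H ≤ G)
    (hpH : ∀ e ∈ p.edges, e ∈ H.edgeSet) :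
    IsShortestPath w H (p.transfer H hpH) := by
  refine ⟨hp.1.transfer hpH, fun q hq => ?_⟩
  have hqG : ∀ e ∈ q.edges, e ∈ G.edgeSet := fun e he => edgeSet_mono hHG (q.edges_subset_edgeSet he)
  rw [walkWeight_transfer, ← walkWeight_transfer q hqG]
  exact hp.2 _ (hq.transfer hqG)

end ShortestPaths

theorem stmt13_general [DecidableEq V] (G : SimpleGraph V) (w : Sym2 V → ℝ)
    (hw : ∀ e ∈ G.edgeSet, 0 < w e)
    (πG : ∀ a b : V, G.Walk a b) (hπG : ∀ a b : V, IsShortestPath w G (πG a b))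
    (huniqG : ∀ (a b : V) (p q : G.Walk a b),
      IsShortestPath w G p → IsShortestPath w G q → p = q)
    (D : Set (Sym2 V))
    (huniqD : ∀ (a b : V) (p q : (G.deleteEdges D).Walk a b),
      IsShortestPath w (G.deleteEdges D) p → IsShortestPath w (G.deleteEdges D) q → p = q)
    (u v : V)
    (P : (G.deleteEdges D).Walk u v) (hP : IsShortestPath w (G.deleteEdges D) P)
    (x : V) (hx : x ∈ P.support)
    -- π(x,v) contains no edge of D
    (hxv : ∀ e ∈ (πG x v).edges, e ∉ D) :
    ∀ z ∈ (P.dropUntil x hx).support, ∀ e ∈ (πG z v).edges, e ∉ D := by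
  have hwG : ∀ e ∈ G.edgeSet, 0 ≤ w e := fun e he => (hw e he).le
  have hwD : ∀ e ∈ (G.deleteEdges D).edgeSet, 0 ≤ w e := fun e he =>
    hwG e (edgeSet_mono (G.deleteEdges_le D) he)
  have hxvD : ∀ e ∈ (πG x v).edges, e ∈ (G.deleteEdges D).edgeSet := fun e he => by
    rw [edgeSet_deleteEdges]
    exact ⟨(πG x v).edges_subset_edgeSet he, hxv e he⟩
  have hsuffix : P.dropUntil x hx = (πG x v).transfer _ hxvD :=
    huniqD _ _ _ _ (hP.dropUntil hwD hx) ((hπG x v).transfer (G.deleteEdges_le D) hxvD)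
  intro z hz e he
  have hzx : z ∈ (πG x v).support := by
    simpa [hsuffix] using hz
  have hzv : πG z v = (πG x v).dropUntil z hzx :=
    huniqG _ _ _ _ (hπG z v) ((hπG x v).dropUntil hwG hzx)
  rw [hzv] at he
  exact hxv e ((πG x v).edges_dropUntil_subset_edges hzx he)

/-- Let `P = π_{G−D}(u,v)`.  If `x` is a vertex on `P` such that
`π(x,v)` contains no edge of `D`, then for every vertex `z` on the suffix of `P` from `x`
to `v`, the path `π(z,v)` contains no edge of `D`. -/
theorem stmt13 [Fintype V] [DecidableEq V] (G : SimpleGraph V) (w : Sym2 V → ℝ)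
    (hw : ∀ e ∈ G.edgeSet, 0 < w e)
    (πG : ∀ a b : V, G.Walk a b) (hπG : ∀ a b : V, IsShortestPath w G (πG a b))
    (huniqG : ∀ (a b : V) (p q : G.Walk a b),
      IsShortestPath w G p → IsShortestPath w G q → p = q)
    (D : Set (Sym2 V)) (hDsub : D ⊆ G.edgeSet)
    (huniqD : ∀ (a b : V) (p q : (G.deleteEdges D).Walk a b),
      IsShortestPath w (G.deleteEdges D) p → IsShortestPath w (G.deleteEdges D) q → p = q)
    (u v : V)
    (P : (G.deleteEdges D).Walk u v) (hP : IsShortestPath w (G.deleteEdges D) P)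
    (x : V) (hx : x ∈ P.support)
    -- π(x,v) contains no edge of D
    (hxv : ∀ e ∈ (πG x v).edges, e ∉ D) :
    ∀ z ∈ (P.dropUntil x hx).support, ∀ e ∈ (πG z v).edges, e ∉ D :=
  stmt13_general G w hw πG hπG huniqG D huniqD u v P hP x hx hxv
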